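/- arXiv:2109.00923 — 3 statements merged into one kernel-verified Lean document; each statement's English description precedes it below -/
import Mathlib

section
/- Strict data processing inequality: if (X,Y) on a finite space is stochastically relevant (for any distinct y, y' ∈ Y, P(X|y) ≠ P(X|y')) and has full support, and θ: Y → Y is a random function independent of (X,Y) that is not an injective (deterministic) map, then I(X; θ(Y)) < I(X; Y). -/
/-- Shannon mutual information `I(X;Y)` of a joint distribution `p` on `X × Y`. -/
noncomputable def mutualInfo {X Y : Type} [Fintype X] [Fintype Y] (p : X × Y → ℝ) : ℝ :=
  ∑ x, ∑ y, p (x, y) *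
    Real.log (p (x, y) / ((∑ y', p (x, y')) * (∑ x', p (x', y))))

/-!
Write `c_y = P(X | Y = y)` and `c'_z = P(X | θ(Y) = z)`. Since `X → Y → θ(Y)` is a Markov
chain, `I(X;Y) - I(X;θ(Y)) = ∑_{y,z} P(y) θ(y,z) KL(c_y ‖ c'_z)`, which is nonnegative by
Gibbs' inequality. If it vanished, then `c_y = c'_z` whenever `θ(y,z) > 0`, so by stochastic
relevance every output `z` is reached from at most one input `y`; a stochastic matrix on a finite
set with this property is the matrix of an injective map.
-/

open Real InformationTheory

section Gibbs

variable {ι : Type*} [Fintype ι] {a b : ι → ℝ}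

noncomputable def klSum (a b : ι → ℝ) : ℝ :=
  ∑ i, a i * log (a i / b i)

lemma klSum_eq_sum_mul_klFun (hb : ∀ i, 0 < b i) (hab : ∑ i, a i = ∑ i, b i) :
    klSum a b = ∑ i, b i * klFun (a i / b i) := by
  have hterm : ∀ i, a i * log (a i / b i) = b i * klFun (a i / b i) + (a i - b i) := by
    intro i
    have hbi := (hb i).ne'
    rw [klFun_apply]
    field_simp
    ring
  rw [klSum, Finset.sum_congr rfl fun i _ => hterm i, Finset.sum_add_distrib,
    Finset.sum_sub_distrib, hab, sub_self, add_zero]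

lemma klSum_nonneg (ha : ∀ i, 0 ≤ a i) (hb : ∀ i, 0 < b i) (hab : ∑ i, a i = ∑ i, b i) :
    0 ≤ klSum a b := by
  rw [klSum_eq_sum_mul_klFun hb hab]
  exact Finset.sum_nonneg fun i _ =>
    mul_nonneg (hb i).le (klFun_nonneg (div_nonneg (ha i) (hb i).le))

lemma eq_of_klSum_eq_zero (ha : ∀ i, 0 ≤ a i) (hb : ∀ i, 0 < b i)
    (hab : ∑ i, a i = ∑ i, b i) (h : klSum a b = 0) : a = b := by
  have hab_nonneg i : 0 ≤ a i / b i := div_nonneg (ha i) (hb i).le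
  rw [klSum_eq_sum_mul_klFun hb hab, Finset.sum_eq_zero_iff_of_nonneg fun i _ =>
    mul_nonneg (hb i).le (klFun_nonneg (hab_nonneg i))] at h
  funext i
  have hi := (mul_eq_zero.mp (h i (Finset.mem_univ i))).resolve_left (hb i).ne'
  rwa [klFun_eq_zero_iff (hab_nonneg i), div_eq_one_iff_eq (hb i).ne'] at hi

end Gibbs

section Channel

variable {X Y Z : Type}

noncomputable def condDist [Fintype X] (p : X × Y → ℝ) (y : Y) (x : X) : ℝ :=
  p (x, y) / ∑ x', p (x', y)

def channelJoint [Fintype Y] (p : X × Y → ℝ) (θ : Y → Z → ℝ) (w : X × Z) : ℝ :=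
  ∑ y, p (w.1, y) * θ y w.2

lemma mutualInfo_eq_sum_mul_log_condDist [Fintype X] [Fintype Y] (p : X × Y → ℝ) :
    mutualInfo p = ∑ x, ∑ y, p (x, y) * log (condDist p y x / ∑ y', p (x, y')) := by
  simp only [mutualInfo, condDist, div_div, mul_comm (∑ y', p (_, y'))]

lemma sum_condDist_eq_one [Fintype X] {p : X × Y → ℝ} {y : Y} (hy : ∑ x, p (x, y) ≠ 0) :
    ∑ x, condDist p y x = 1 := by
  simp only [condDist, ← Finset.sum_div, div_self hy]

lemma condDist_pos [Fintype X] {p : X × Y → ℝ} {y : Y} (hy : ∀ x, 0 < p (x, y)) (x : X) :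
    0 < condDist p y x :=
  div_pos (hy x) (Finset.sum_pos (fun x' _ => hy x') ⟨x, Finset.mem_univ x⟩)

lemma channelJoint_pos [Fintype Y] {p : X × Y → ℝ} {θ : Y → Z → ℝ} (hp : ∀ w, 0 < p w)
    (hθ0 : ∀ y z, 0 ≤ θ y z) {y : Y} {z : Z} (hyz : 0 < θ y z) (x : X) :
    0 < channelJoint p θ (x, z) :=
  Finset.sum_pos' (fun y' _ => mul_nonneg (hp _).le (hθ0 y' z))
    ⟨y, Finset.mem_univ y, mul_pos (hp _) hyz⟩

lemma sum_channelJoint_left [Fintype Y] [Fintype Z] {p : X × Y → ℝ} {θ : Y → Z → ℝ}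
    (hθ1 : ∀ y, ∑ z, θ y z = 1) (x : X) :
    ∑ z, channelJoint p θ (x, z) = ∑ y, p (x, y) := by
  simp only [channelJoint]
  rw [Finset.sum_comm]
  simp only [← Finset.mul_sum, hθ1, mul_one]

end Channel

section DataProcessing

variable {X Y Z : Type} [Fintype X] [Fintype Y] [Fintype Z]

lemma mutualInfo_sub_mutualInfo_channelJoint {p : X × Y → ℝ} {θ : Y → Z → ℝ}
    (hp : ∀ w, 0 < p w) (hθ0 : ∀ y z, 0 ≤ θ y z) (hθ1 : ∀ y, ∑ z, θ y z = 1) :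
    mutualInfo p - mutualInfo (channelJoint p θ) =
      ∑ y, ∑ z, (∑ x, p (x, y)) * θ y z *
        klSum (condDist p y) (condDist (channelJoint p θ) z) := by
  have hterm : ∀ x y z,
      p (x, y) * θ y z * log (condDist p y x / ∑ y', p (x, y')) -
        p (x, y) * θ y z * log (condDist (channelJoint p θ) z x / ∑ y', p (x, y')) =
      (∑ x', p (x', y)) * θ y z *
        (condDist p y x * log (condDist p y x / condDist (channelJoint p θ) z x)) := by
    intro x y z
    rcases (hθ0 y z).eq_or_lt with hyz | hyz
    · simp [← hyz]
    have hc := condDist_pos (fun x' => hp (x', y)) x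
    have hc' := condDist_pos (fun x' => channelJoint_pos hp hθ0 hyz x') x
    have hpX : 0 < ∑ y', p (x, y') := Finset.sum_pos (fun _ _ => hp _) ⟨y, Finset.mem_univ y⟩
    have hpY : 0 < ∑ x', p (x', y) := Finset.sum_pos (fun _ _ => hp _) ⟨x, Finset.mem_univ x⟩
    rw [log_div hc.ne' hpX.ne', log_div hc'.ne' hpX.ne', log_div hc.ne' hc'.ne']
    have hp_eq : (∑ x', p (x', y)) * condDist p y x = p (x, y) := mul_div_cancel₀ _ hpY.ne'
    rw [← hp_eq]
    ring
  calc mutualInfo p - mutualInfo (channelJoint p θ)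
      = ∑ x, ∑ y, ∑ z, (p (x, y) * θ y z * log (condDist p y x / ∑ y', p (x, y')) -
          p (x, y) * θ y z * log (condDist (channelJoint p θ) z x / ∑ y', p (x, y'))) := by
        rw [mutualInfo_eq_sum_mul_log_condDist p,
          mutualInfo_eq_sum_mul_log_condDist (channelJoint p θ)]
        simp only [sum_channelJoint_left hθ1, Finset.sum_sub_distrib]
        congr 1
        · simp only [← Finset.sum_mul, ← Finset.mul_sum, hθ1, mul_one]
        · refine Finset.sum_congr rfl fun x _ => ?_
          rw [Finset.sum_comm]
          simp only [channelJoint, Finset.sum_mul]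
    _ = ∑ x, ∑ y, ∑ z, (∑ x', p (x', y)) * θ y z *
          (condDist p y x * log (condDist p y x / condDist (channelJoint p θ) z x)) := by
        simp only [hterm]
    _ = _ := by
        simp only [klSum, Finset.mul_sum]
        rw [Finset.sum_comm]
        refine Finset.sum_congr rfl fun y _ => Finset.sum_comm

lemma condDist_eq_of_mutualInfo_le_mutualInfo_channelJoint
    {p : X × Y → ℝ} {θ : Y → Z → ℝ} (hp : ∀ w, 0 < p w) (hθ0 : ∀ y z, 0 ≤ θ y z)
    (hθ1 : ∀ y, ∑ z, θ y z = 1)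
    (hle : mutualInfo p ≤ mutualInfo (channelJoint p θ)) {y : Y} {z : Z} (hyz : 0 < θ y z) :
    condDist p y = condDist (channelJoint p θ) z := by
  cases isEmpty_or_nonempty X
  · exact funext isEmptyElim
  have hpY : ∀ y, 0 < ∑ x, p (x, y) := fun y =>
    Finset.sum_pos (fun _ _ => hp _) Finset.univ_nonempty
  have hsum : ∀ y z, 0 < θ y z →
      ∑ x, condDist p y x = ∑ x, condDist (channelJoint p θ) z x := fun y z hyz => by
    rw [sum_condDist_eq_one (hpY y).ne', sum_condDist_eq_one
      (Finset.sum_pos (fun x _ => channelJoint_pos hp hθ0 hyz x) Finset.univ_nonempty).ne']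
  have hterm_nonneg : ∀ y z, 0 ≤ (∑ x, p (x, y)) * θ y z *
      klSum (condDist p y) (condDist (channelJoint p θ) z) := by
    intro y z
    rcases (hθ0 y z).eq_or_lt with hyz | hyz
    · simp [← hyz]
    exact mul_nonneg (mul_nonneg (hpY y).le hyz.le) <| klSum_nonneg
      (fun x => (condDist_pos (fun x' => hp (x', y)) x).le)
      (condDist_pos fun x => channelJoint_pos hp hθ0 hyz x) (hsum y z hyz)
  have htotal : ∑ y, ∑ z, (∑ x, p (x, y)) * θ y z *
      klSum (condDist p y) (condDist (channelJoint p θ) z) = 0 := by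
    refine le_antisymm ?_ (Finset.sum_nonneg fun y _ => Finset.sum_nonneg fun z _ =>
      hterm_nonneg y z)
    rw [← mutualInfo_sub_mutualInfo_channelJoint hp hθ0 hθ1]
    linarith
  rw [Finset.sum_eq_zero_iff_of_nonneg fun y _ => Finset.sum_nonneg fun z _ =>
    hterm_nonneg y z] at htotal
  have hyz_term := (Finset.sum_eq_zero_iff_of_nonneg fun z _ => hterm_nonneg y z).mp
    (htotal y (Finset.mem_univ y)) z (Finset.mem_univ z)
  exact eq_of_klSum_eq_zero (fun x => (condDist_pos (fun x' => hp (x', y)) x).le)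
    (condDist_pos fun x => channelJoint_pos hp hθ0 hyz x) (hsum y z hyz)
    ((mul_eq_zero.mp hyz_term).resolve_left (mul_pos (hpY y) hyz).ne')

end DataProcessing

lemma exists_injective_eq_ite_of_columns_subsingleton {Y : Type} [Fintype Y] [DecidableEq Y]
    {θ : Y → Y → ℝ} (hθ1 : ∀ y, ∑ z, θ y z = 1)
    (hcol : ∀ z, {y | θ y z ≠ 0}.Subsingleton) :
    ∃ f : Y → Y, Function.Injective f ∧ ∀ y z, θ y z = if z = f y then 1 else 0 := by
  have hrow : ∀ y, ∃ z, θ y z ≠ 0 := fun y => by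
    by_contra! h
    simpa [h] using hθ1 y
  choose f hf using hrow
  have hf_inj : Function.Injective f := fun y y' hyy' => hcol (f y) (hf y) (hyy' ▸ hf y')
  have hzero : ∀ y z, z ≠ f y → θ y z = 0 := by
    intro y z hz
    by_contra hyz
    obtain ⟨y', rfl⟩ := Finite.surjective_of_injective hf_inj z
    exact hz (congrArg f (hcol (f y') (hf y') hyz))
  refine ⟨f, hf_inj, fun y z => ?_⟩
  split_ifs with hz
  · rw [← hθ1 y, Finset.sum_eq_single (f y) (fun z _ hz => hzero y z hz) (by simp), hz]
  · exact hzero y z hz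

theorem strict_data_processing_inequality_general (X Y : Type) [Fintype X] [Fintype Y]
    [DecidableEq Y]
    (p : X × Y → ℝ) (hpos : ∀ w, 0 < p w)
    (hrel : ∀ y y' : Y, y ≠ y' →
      (fun x => p (x, y) / ∑ x', p (x', y)) ≠ (fun x => p (x, y') / ∑ x', p (x', y')))
    (θ : Y → Y → ℝ) (hθ0 : ∀ y y', 0 ≤ θ y y') (hθ1 : ∀ y, ∑ y', θ y y' = 1)
    (hnoninj : ¬ ∃ f : Y → Y, Function.Injective f ∧
      ∀ y y', θ y y' = if y' = f y then 1 else 0) :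
    mutualInfo (fun w : X × Y => ∑ y, p (w.1, y) * θ y w.2) < mutualInfo p := by
  by_contra! hle
  refine hnoninj (exists_injective_eq_ite_of_columns_subsingleton hθ1 fun z y hy y' hy' => ?_)
  by_contra hne
  have hcond : ∀ y, θ y z ≠ 0 → condDist p y = condDist (channelJoint p θ) z := fun y hy =>
    condDist_eq_of_mutualInfo_le_mutualInfo_channelJoint hpos hθ0 hθ1 hle
      ((hθ0 y z).lt_of_ne' hy)
  exact hrel y y' hne ((hcond y hy).trans (hcond y' hy').symm)

/-- **Strict data processing inequality.**
If `(X,Y)` has a full-support joint distribution `p` on a finite space, is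
stochastically relevant (distinct values of `Y` induce distinct conditional
distributions `P(X|y)`), and `θ` is a random function `Y → Y` (a channel with
randomness independent of `(X,Y)`) which is *not* an injective deterministic map,
then `I(X; θ(Y)) < I(X; Y)`. -/
theorem strict_data_processing_inequality (X Y : Type) [Fintype X] [Fintype Y]
    [DecidableEq Y]
    (p : X × Y → ℝ) (hpos : ∀ w, 0 < p w) (hsum : ∑ w, p w = 1)
    (hrel : ∀ y y' : Y, y ≠ y' →
      (fun x => p (x, y) / ∑ x', p (x', y)) ≠ (fun x => p (x, y') / ∑ x', p (x', y')))
    (θ : Y → Y → ℝ) (hθ0 : ∀ y y', 0 ≤ θ y y') (hθ1 : ∀ y, ∑ y', θ y y' = 1)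
    (hnoninj : ¬ ∃ f : Y → Y, Function.Injective f ∧
      ∀ y y', θ y y' = if y' = f y then 1 else 0) :
    mutualInfo (fun w : X × Y => ∑ y, p (w.1, y) * θ y w.2) < mutualInfo p :=
  strict_data_processing_inequality_general X Y p hpos hrel θ hθ0 hθ1 hnoninj
end

section
/- Let X_A, X_B, C be discrete random variables with full-support joint distribution, and let θ be a (possibly random) function of X_A independent of (X_A, X_B, C). Then the expected target payment under misreporting, E[ln P(X_B | C, θ(X_A)) − ln P(X_B | C)], equals the truthful payment I(X_B; X_A | C) minus E[KL(P(X_B | C, X_A) ‖ P(X_B | C, θ(X_A)))], and hence is at most I(X_B; X_A | C). -/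
/-!
Conditionally on `C = c` and on the report `a'`, the log-score of the posterior given the report
differs from the log-score of the posterior given the true signal `a` by
`log (P(b | c, a) / P(b | c, a'))`. Averaging this difference turns the misreporting payment into
the truthful one minus an average of Kullback–Leibler divergences, each of which is nonnegative
by Gibbs' inequality `q - r ≤ q log (q / r)`.
-/

variable {A A' B C : Type} [Fintype A] [Fintype A'] [Fintype B] [Fintype C]

/-- Marginal of `(X_A, C)`. -/
noncomputable def pAC (p : A × B × C → ℝ) (a : A) (c : C) : ℝ := ∑ b, p (a, b, c)

/-- Marginal of `(X_B, C)`. -/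
noncomputable def pBC (p : A × B × C → ℝ) (b : B) (c : C) : ℝ := ∑ a, p (a, b, c)

/-- Marginal of `C`. -/
noncomputable def pC (p : A × B × C → ℝ) (c : C) : ℝ := ∑ a, ∑ b, p (a, b, c)

/-- Joint distribution of `(θ(X_A), X_B, C)` induced by the common prior `p` and the
reporting channel `θ : A → A'` (randomness independent of `(X_A, X_B, C)`). -/
noncomputable def pushed (p : A × B × C → ℝ) (θ : A → A' → ℝ) (a' : A') (b : B) (c : C) : ℝ :=
  ∑ a, p (a, b, c) * θ a a'

/-- Marginal of `(θ(X_A), C)` under the induced joint distribution. -/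
noncomputable def pushedAC (p : A × B × C → ℝ) (θ : A → A' → ℝ) (a' : A') (c : C) : ℝ :=
  ∑ b, pushed p θ a' b c

/-- Truthful expected target payment: `I(X_B; X_A | C)`. -/
noncomputable def truthfulPayment (p : A × B × C → ℝ) : ℝ :=
  ∑ a, ∑ b, ∑ c, p (a, b, c) *
    Real.log ((p (a, b, c) / pAC p a c) / (pBC p b c / pC p c))

/-- Expected target payment when reporting through the channel `θ`:
`E[ln P(X_B | C, θ(X_A)) − ln P(X_B | C)]`, expectation over the joint distribution of
`(X_A, X_B, C)` and the channel. -/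
noncomputable def misreportPayment (p : A × B × C → ℝ) (θ : A → A' → ℝ) : ℝ :=
  ∑ a, ∑ b, ∑ c, ∑ a', p (a, b, c) * θ a a' *
    (Real.log (pushed p θ a' b c / pushedAC p θ a' c) - Real.log (pBC p b c / pC p c))

/-- Expected KL divergence `E[KL(P(X_B|C,X_A) ‖ P(X_B|C,θ(X_A)))]`, expectation over
`(C, X_A)` and the channel. -/
noncomputable def expectedKL (p : A × B × C → ℝ) (θ : A → A' → ℝ) : ℝ :=
  ∑ a, ∑ c, ∑ a', pAC p a c * θ a a' *
    ∑ b, (p (a, b, c) / pAC p a c) *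
      Real.log ((p (a, b, c) / pAC p a c) / (pushed p θ a' b c / pushedAC p θ a' c))

open Real Finset

theorem sub_le_mul_log_div {q r : ℝ} (hq : 0 ≤ q) (hr : 0 < r) : q - r ≤ q * log (q / r) := by
  rcases hq.eq_or_lt with rfl | hq
  · simpa using hr.le
  have h := one_sub_inv_le_log_of_pos (div_pos hq hr)
  rw [inv_div] at h
  calc q - r = q * (1 - r / q) := by field_simp
    _ ≤ q * log (q / r) := mul_le_mul_of_nonneg_left h hq.le

theorem sum_mul_log_div_nonneg {ι : Type*} (s : Finset ι) {q r : ι → ℝ}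
    (hq : ∀ i ∈ s, 0 ≤ q i) (hr : ∀ i ∈ s, 0 < r i) (hqr : ∑ i ∈ s, r i ≤ ∑ i ∈ s, q i) :
    0 ≤ ∑ i ∈ s, q i * log (q i / r i) :=
  calc 0 ≤ ∑ i ∈ s, (q i - r i) := by rw [sum_sub_distrib]; linarith
    _ ≤ _ := sum_le_sum fun i hi => sub_le_mul_log_div (hq i hi) (hr i hi)

theorem log_div_sub_log_div {x y z : ℝ} (hx : x ≠ 0) (hy : y ≠ 0) (hz : z ≠ 0) :
    log (x / y) - log (x / z) = log z - log y := by
  rw [log_div hx hy, log_div hx hz]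
  ring

section Payments

variable {p : A × B × C → ℝ} {θ : A → A' → ℝ}

omit [Fintype A] [Fintype C] in
theorem pAC_pos (hp : ∀ w, 0 < p w) (a : A) (b : B) (c : C) : 0 < pAC p a c :=
  sum_pos' (fun _ _ => (hp _).le) ⟨b, mem_univ _, hp _⟩

omit [Fintype B] [Fintype C] in
theorem pBC_pos (hp : ∀ w, 0 < p w) (a : A) (b : B) (c : C) : 0 < pBC p b c :=
  sum_pos' (fun _ _ => (hp _).le) ⟨a, mem_univ _, hp _⟩

omit [Fintype C] in
theorem pC_pos (hp : ∀ w, 0 < p w) (a : A) (b : B) (c : C) : 0 < pC p c :=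
  sum_pos' (fun a' _ => (pAC_pos hp a' b c).le) ⟨a, mem_univ _, pAC_pos hp a b c⟩

omit [Fintype A'] [Fintype B] [Fintype C] in
theorem pushed_nonneg (hp : ∀ w, 0 ≤ p w) (hθ0 : ∀ a a', 0 ≤ θ a a') (a' : A') (b : B) (c : C) :
    0 ≤ pushed p θ a' b c :=
  sum_nonneg fun _ _ => mul_nonneg (hp _) (hθ0 _ _)

omit [Fintype A'] [Fintype B] [Fintype C] in
theorem pushed_pos (hp : ∀ w, 0 < p w) (hθ0 : ∀ a a', 0 ≤ θ a a') {a : A} {a' : A'}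
    (ha : 0 < θ a a') (b : B) (c : C) : 0 < pushed p θ a' b c :=
  sum_pos' (fun _ _ => mul_nonneg (hp _).le (hθ0 _ _)) ⟨a, mem_univ _, mul_pos (hp _) ha⟩

omit [Fintype A'] [Fintype C] in
theorem pushedAC_pos (hp : ∀ w, 0 < p w) (hθ0 : ∀ a a', 0 ≤ θ a a') {a : A} {a' : A'}
    (ha : 0 < θ a a') (b : B) (c : C) : 0 < pushedAC p θ a' c :=
  sum_pos' (fun b' _ => pushed_nonneg (fun w => (hp w).le) hθ0 a' b' c)
    ⟨b, mem_univ _, pushed_pos hp hθ0 ha b c⟩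

theorem truthfulPayment_eq_sum_channel (hθ1 : ∀ a, ∑ a', θ a a' = 1) :
    truthfulPayment p = ∑ a, ∑ b, ∑ c, ∑ a', p (a, b, c) * θ a a' *
      log ((p (a, b, c) / pAC p a c) / (pBC p b c / pC p c)) := by
  simp only [truthfulPayment, ← sum_mul, ← mul_sum, hθ1, mul_one]

theorem expectedKL_eq_sum (hp : ∀ w, 0 < p w) :
    expectedKL p θ = ∑ a, ∑ b, ∑ c, ∑ a', p (a, b, c) * θ a a' *
      log ((p (a, b, c) / pAC p a c) / (pushed p θ a' b c / pushedAC p θ a' c)) := by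
  have hterm : ∀ a b c a', pAC p a c * θ a a' * ((p (a, b, c) / pAC p a c) *
      log ((p (a, b, c) / pAC p a c) / (pushed p θ a' b c / pushedAC p θ a' c))) =
      p (a, b, c) * θ a a' *
        log ((p (a, b, c) / pAC p a c) / (pushed p θ a' b c / pushedAC p θ a' c)) := by
    intro a b c a'
    have := (pAC_pos hp a b c).ne'
    field_simp
  simp only [expectedKL, mul_sum, hterm]
  refine sum_congr rfl fun a _ => ?_
  exact (sum_congr rfl fun c _ => sum_comm).trans sum_comm

omit [Fintype A'] [Fintype C] in
theorem misreportPayment_summand_eq (hp : ∀ w, 0 < p w) (hθ0 : ∀ a a', 0 ≤ θ a a')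
    (a : A) (b : B) (c : C) (a' : A') :
    p (a, b, c) * θ a a' *
      (log (pushed p θ a' b c / pushedAC p θ a' c) - log (pBC p b c / pC p c)) =
    p (a, b, c) * θ a a' * log ((p (a, b, c) / pAC p a c) / (pBC p b c / pC p c)) -
      p (a, b, c) * θ a a' *
        log ((p (a, b, c) / pAC p a c) / (pushed p θ a' b c / pushedAC p θ a' c)) := by
  rcases (hθ0 a a').eq_or_lt with h | h
  · simp [← h]
  rw [← mul_sub, log_div_sub_log_div]
  · exact (div_pos (hp _) (pAC_pos hp a b c)).ne'
  · exact (div_pos (pBC_pos hp a b c) (pC_pos hp a b c)).ne'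
  · exact (div_pos (pushed_pos hp hθ0 h b c) (pushedAC_pos hp hθ0 h b c)).ne'

theorem misreportPayment_eq_truthfulPayment_sub_expectedKL (hp : ∀ w, 0 < p w)
    (hθ0 : ∀ a a', 0 ≤ θ a a') (hθ1 : ∀ a, ∑ a', θ a a' = 1) :
    misreportPayment p θ = truthfulPayment p - expectedKL p θ := by
  rw [truthfulPayment_eq_sum_channel hθ1, expectedKL_eq_sum hp]
  simp only [misreportPayment, misreportPayment_summand_eq hp hθ0, sum_sub_distrib]

theorem expectedKL_nonneg (hp : ∀ w, 0 < p w) (hθ0 : ∀ a a', 0 ≤ θ a a') :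
    0 ≤ expectedKL p θ := by
  rcases isEmpty_or_nonempty B with hB | ⟨⟨b⟩⟩
  · simp [expectedKL]
  refine sum_nonneg fun a _ => sum_nonneg fun c _ => sum_nonneg fun a' _ => ?_
  rcases (hθ0 a a').eq_or_lt with h | h
  · simp [← h]
  refine mul_nonneg (mul_nonneg (pAC_pos hp a b c).le h.le)
    (sum_mul_log_div_nonneg _ (fun b _ => (div_pos (hp _) (pAC_pos hp a b c)).le)
      (fun b _ => div_pos (pushed_pos hp hθ0 h b c) (pushedAC_pos hp hθ0 h b c)) ?_)
  rw [← sum_div, ← sum_div]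
  exact (div_self_le_one _).trans (div_self (pAC_pos hp a b c).ne').ge

end Payments

theorem misreport_payment_eq_truthful_sub_KL_general
    (p : A × B × C → ℝ) (hpos : ∀ w, 0 < p w)
    (θ : A → A' → ℝ) (hθ0 : ∀ a a', 0 ≤ θ a a') (hθ1 : ∀ a, ∑ a', θ a a' = 1) :
    misreportPayment p θ = truthfulPayment p - expectedKL p θ ∧
      misreportPayment p θ ≤ truthfulPayment p := by
  have hEq := misreportPayment_eq_truthfulPayment_sub_expectedKL hpos hθ0 hθ1
  exact ⟨hEq, hEq ▸ sub_le_self _ (expectedKL_nonneg hpos hθ0)⟩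

/-- **Misreporting loses the expected KL divergence.**
For `X_A, X_B, C` with full-support joint distribution `p` on finite spaces and a
reporting channel `θ` (randomness independent of `(X_A, X_B, C)`), the expected target
payment under misreporting equals the truthful payment `I(X_B; X_A | C)` minus
`E[KL(P(X_B|C,X_A) ‖ P(X_B|C,θ(X_A)))]`, and hence is at most `I(X_B; X_A | C)`. -/
theorem misreport_payment_eq_truthful_sub_KL
    (p : A × B × C → ℝ) (hpos : ∀ w, 0 < p w) (hsum : ∑ w, p w = 1)
    (θ : A → A' → ℝ) (hθ0 : ∀ a a', 0 ≤ θ a a') (hθ1 : ∀ a, ∑ a', θ a a' = 1) :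
    misreportPayment p θ = truthfulPayment p - expectedKL p θ ∧
      misreportPayment p θ ≤ truthfulPayment p :=
  misreport_payment_eq_truthful_sub_KL_general p hpos θ hθ0 hθ1
end

section
/- If I(X_B; (X_A^{rest}) | X_A, W) = 0 (conditional independence of the remaining signals given X_A and W) and I(X_B; X_A^{rest} | X_A^{part}, W) > 0 for the deviation channel, then I(X_B; g(X_A^{part}) | W) < I(X_B; X_A | W) for any deterministic best-guess function g of the partial signals X_A^{part}, where X_A^{part} is a deterministic function of (X_A, X_A^{rest}). -/
/-
Chain rule for the pair `(X_A, X_A^{rest})`: since `I(X_B; X_A^{rest} | X_A, W) = 0`,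
`I(X_B; X_A | W) = I(X_B; (X_A, X_A^{rest}) | W)`.  Data processing along
`(a, r) ↦ (φ (a, r), r)` and the chain rule for `(X_A^{part}, X_A^{rest})` bound this from below
by `I(X_B; X_A^{part} | W) + I(X_B; X_A^{rest} | X_A^{part}, W)`, whose second summand is positive,
and data processing along `g` gives `I(X_B; g(X_A^{part}) | W) ≤ I(X_B; X_A^{part} | W)`.
Data processing for a deterministic map is the log-sum inequality applied on each fibre.
-/

/-- Conditional Shannon mutual information `I(U;V|W)` of a joint distribution `q`
on `U × V × W` (conditioning on the third coordinate). -/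
noncomputable def cmi {U V W : Type} [Fintype U] [Fintype V] [Fintype W]
    (q : U × V × W → ℝ) : ℝ :=
  ∑ u, ∑ v, ∑ w, q (u, v, w) *
    Real.log (q (u, v, w) * (∑ u', ∑ v', q (u', v', w)) /
      ((∑ v', q (u, v', w)) * (∑ u', q (u', v, w))))

open Finset Real

lemma mul_log_le_mul_log_div_add_sub {a c k : ℝ} (ha : 0 ≤ a) (hc : 0 ≤ c) (hk : 0 < k)
    (hac : 0 < a → 0 < c) : a * log k ≤ a * log (a / c) + (k * c - a) := by
  rcases ha.eq_or_lt with rfl | ha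
  · simpa using mul_nonneg hk.le hc
  have hc := hac ha
  have h := mul_le_mul_of_nonneg_left (log_le_sub_one_of_pos (by positivity : 0 < k * c / a)) ha.le
  rw [log_div (by positivity) ha.ne', log_mul hk.ne' hc.ne', mul_sub_one,
    mul_div_cancel₀ _ ha.ne'] at h
  rw [log_div ha.ne' hc.ne']
  nlinarith

theorem sum_mul_log_sum_div_le {ι : Type*} (s : Finset ι) {a c : ι → ℝ}
    (ha : ∀ i ∈ s, 0 ≤ a i) (hc : ∀ i ∈ s, 0 ≤ c i) (hac : ∀ i ∈ s, 0 < a i → 0 < c i) :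
    (∑ i ∈ s, a i) * log ((∑ i ∈ s, a i) / ∑ i ∈ s, c i) ≤
      ∑ i ∈ s, a i * log (a i / c i) := by
  rcases (sum_nonneg ha).eq_or_lt with hA | hA
  · rw [← hA, zero_mul]
    refine (sum_eq_zero fun i hi => ?_).ge
    rw [(sum_eq_zero_iff_of_nonneg ha).1 hA.symm i hi, zero_mul]
  obtain ⟨j, hj, haj⟩ := (sum_pos_iff_of_nonneg ha).1 hA
  have hC : 0 < ∑ i ∈ s, c i := sum_pos' hc ⟨j, hj, hac j hj haj⟩
  calc (∑ i ∈ s, a i) * log ((∑ i ∈ s, a i) / ∑ i ∈ s, c i)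
      = ∑ i ∈ s, a i * log ((∑ i ∈ s, a i) / ∑ i ∈ s, c i) := sum_mul ..
    _ ≤ ∑ i ∈ s, (a i * log (a i / c i) +
          ((∑ i ∈ s, a i) / (∑ i ∈ s, c i) * c i - a i)) :=
      sum_le_sum fun i hi => mul_log_le_mul_log_div_add_sub (ha i hi) (hc i hi)
        (div_pos hA hC) (hac i hi)
    _ = ∑ i ∈ s, a i * log (a i / c i) := by
      rw [sum_add_distrib, sum_sub_distrib, ← mul_sum, div_mul_cancel₀ _ hC.ne', sub_self,
        add_zero]

lemma mul_log_div_eq_mul_log_div_add {x y z k m n : ℝ} (hx : 0 ≤ x) (hxz : x ≤ z) (hzk : z ≤ k)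
    (hzy : z ≤ y) (hym : y ≤ m) (hxn : x ≤ n) :
    x * log (x * m / (y * n)) = x * log (z * m / (y * k)) + x * log (x * k / (z * n)) := by
  rcases hx.eq_or_lt with rfl | hx
  · simp
  have hz := hx.trans_le hxz
  have hy := hz.trans_le hzy
  have := hz.trans_le hzk
  have := hy.trans_le hym
  have := hx.trans_le hxn
  rw [← mul_add, ← log_mul (by positivity) (by positivity)]
  congr 2
  field_simp

theorem cmi_prod_eq_add {B V₁ V₂ W : Type} [Fintype B] [Fintype V₁] [Fintype V₂] [Fintype W]
    {q : B × (V₁ × V₂) × W → ℝ} (hq : ∀ t, 0 ≤ q t) :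
    cmi q = cmi (fun t : B × V₁ × W => ∑ v₂, q (t.1, (t.2.1, v₂), t.2.2)) +
      cmi (fun t : B × V₂ × (V₁ × W) => q (t.1, (t.2.2.1, t.2.1), t.2.2.2)) := by
  have e0 : cmi q = ∑ b, ∑ v₁, ∑ v₂, ∑ w, q (b, (v₁, v₂), w) *
      log (q (b, (v₁, v₂), w) * (∑ b', ∑ v₁', ∑ v₂', q (b', (v₁', v₂'), w)) /
        ((∑ v₁', ∑ v₂', q (b, (v₁', v₂'), w)) * ∑ b', q (b', (v₁, v₂), w))) := by
    simp only [cmi, Fintype.sum_prod_type]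
  have e1 : cmi (fun t : B × V₁ × W => ∑ v₂, q (t.1, (t.2.1, v₂), t.2.2)) =
      ∑ b, ∑ v₁, ∑ v₂, ∑ w, q (b, (v₁, v₂), w) *
        log ((∑ v₂', q (b, (v₁, v₂'), w)) * (∑ b', ∑ v₁', ∑ v₂', q (b', (v₁', v₂'), w)) /
          ((∑ v₁', ∑ v₂', q (b, (v₁', v₂'), w)) * ∑ b', ∑ v₂', q (b', (v₁, v₂'), w))) := by
    simp only [cmi]
    refine sum_congr rfl fun b _ => sum_congr rfl fun v₁ _ => ?_
    rw [sum_comm]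
    exact sum_congr rfl fun w _ => sum_mul ..
  have e2 : cmi (fun t : B × V₂ × (V₁ × W) => q (t.1, (t.2.2.1, t.2.1), t.2.2.2)) =
      ∑ b, ∑ v₁, ∑ v₂, ∑ w, q (b, (v₁, v₂), w) *
        log (q (b, (v₁, v₂), w) * (∑ b', ∑ v₂', q (b', (v₁, v₂'), w)) /
          ((∑ v₂', q (b, (v₁, v₂'), w)) * ∑ b', q (b', (v₁, v₂), w))) := by
    simp only [cmi, Fintype.sum_prod_type]
    exact sum_congr rfl fun b _ => sum_comm
  simp only [e0, e1, e2, ← sum_add_distrib]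
  refine sum_congr rfl fun b _ => sum_congr rfl fun v₁ _ => sum_congr rfl fun v₂ _ =>
    sum_congr rfl fun w _ => mul_log_div_eq_mul_log_div_add (hq _) ?_ ?_ ?_ ?_ ?_
  · exact single_le_sum (f := fun v₂' => q (b, (v₁, v₂'), w)) (fun _ _ => hq _) (mem_univ v₂)
  · exact single_le_sum (f := fun b' => ∑ v₂', q (b', (v₁, v₂'), w))
      (fun _ _ => sum_nonneg fun _ _ => hq _) (mem_univ b)
  · exact single_le_sum (f := fun v₁' => ∑ v₂', q (b, (v₁', v₂'), w))
      (fun _ _ => sum_nonneg fun _ _ => hq _) (mem_univ v₁)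
  · exact single_le_sum (f := fun b' => ∑ v₁', ∑ v₂', q (b', (v₁', v₂'), w))
      (fun _ _ => sum_nonneg fun _ _ => sum_nonneg fun _ _ => hq _) (mem_univ b)
  · exact single_le_sum (f := fun b' => q (b', (v₁, v₂), w)) (fun _ _ => hq _) (mem_univ b)

section

variable {U V V' V'' W : Type} [Fintype V] [DecidableEq V'] [DecidableEq V'']

def mapMid (f : V → V') (q : U × V × W → ℝ) : U × V' × W → ℝ :=
  fun t => ∑ v with f v = t.2.1, q (t.1, v, t.2.2)

lemma mapMid_nonneg (f : V → V') {q : U × V × W → ℝ} (hq : ∀ t, 0 ≤ q t) (t : U × V' × W) :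
    0 ≤ mapMid f q t :=
  sum_nonneg fun _ _ => hq _

lemma mapMid_mapMid [Fintype V'] (g : V' → V'') (f : V → V') (q : U × V × W → ℝ) :
    mapMid g (mapMid f q) = mapMid (g ∘ f) q := by
  ext ⟨u, x, w⟩
  simp only [mapMid, Function.comp_apply]
  rw [← sum_fiberwise_of_maps_to (s := {v | g (f v) = x}) (t := {v' | g v' = x}) (g := f)
    (fun v hv => by simpa using hv)]
  refine sum_congr rfl fun v' hv' => sum_congr ?_ fun _ _ => rfl
  ext v
  simp only [mem_filter, mem_univ, true_and] at hv' ⊢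
  exact ⟨fun h => ⟨h ▸ hv', h⟩, And.right⟩

lemma sum_mapMid_prod {V₁ V₂ : Type} [Fintype V₂] [DecidableEq V₁] [DecidableEq V₂]
    (F : V → V₁ × V₂) (q : U × V × W → ℝ) (u : U) (v₁ : V₁) (w : W) :
    ∑ v₂, mapMid F q (u, (v₁, v₂), w) = mapMid (fun v => (F v).1) q (u, v₁, w) := by
  simp only [mapMid]
  rw [← sum_fiberwise _ (fun v => (F v).2)]
  refine sum_congr rfl fun v₂ _ => sum_congr ?_ fun _ _ => rfl
  ext v
  simp [Prod.ext_iff]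

lemma mapMid_mk_snd_apply {V₁ V₂ : Type} [Fintype V₁] [Fintype V₂] [DecidableEq V₂]
    (f : V₁ × V₂ → V') (q : U × (V₁ × V₂) × W → ℝ) (u : U) (v' : V') (v₂ : V₂) (w : W) :
    mapMid (fun x => (f x, x.2)) q (u, (v', v₂), w) =
      ∑ v₁ with f (v₁, v₂) = v', q (u, (v₁, v₂), w) := by
  simp only [mapMid, sum_filter, Fintype.sum_prod_type, Prod.mk.injEq, ite_and]
  refine sum_congr rfl fun v₁ _ => ?_
  rw [Fintype.sum_eq_single v₂ fun x hx => by simp [hx]]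
  simp

theorem cmi_mapMid_le [Fintype U] [Fintype V'] [Fintype W] (f : V → V') {q : U × V × W → ℝ}
    (hq : ∀ t, 0 ≤ q t) :
    cmi (mapMid f q) ≤ cmi q := by
  set M : W → ℝ := fun w => ∑ u, ∑ v, q (u, v, w)
  set Mu : U → W → ℝ := fun u w => ∑ v, q (u, v, w)
  set N : V → W → ℝ := fun v w => ∑ u, q (u, v, w)
  have hMu : ∀ u w, ∑ v', mapMid f q (u, v', w) = Mu u w :=
    fun u w => sum_fiberwise univ f fun v => q (u, v, w)
  have hN : ∀ v' w, ∑ u, mapMid f q (u, v', w) = ∑ v with f v = v', N v w :=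
    fun v' w => by simp only [mapMid]; exact sum_comm
  have hR : cmi q = ∑ u, ∑ v', ∑ w, ∑ v with f v = v',
      q (u, v, w) * log (q (u, v, w) * M w / (Mu u w * N v w)) := by
    refine sum_congr rfl fun u _ => ?_
    rw [← sum_fiberwise univ f]
    exact sum_congr rfl fun v' _ => sum_comm
  rw [hR]
  unfold cmi
  simp only [hMu, hN]
  refine sum_le_sum fun u _ => sum_le_sum fun v' _ => sum_le_sum fun w _ => ?_
  have hMu_nonneg : ∀ u, 0 ≤ Mu u w := fun _ => sum_nonneg fun _ _ => hq _
  have hM_nonneg : 0 ≤ M w := sum_nonneg fun u _ => hMu_nonneg u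
  have hN_nonneg : ∀ v, 0 ≤ N v w := fun v => sum_nonneg fun _ _ => hq _
  have hc_pos : ∀ v, 0 < q (u, v, w) → 0 < Mu u w * N v w / M w := fun v h => by
    have hq_le_Mu : q (u, v, w) ≤ Mu u w :=
      single_le_sum (f := fun v => q (u, v, w)) (fun _ _ => hq _) (mem_univ v)
    have hq_le_N : q (u, v, w) ≤ N v w :=
      single_le_sum (f := fun u => q (u, v, w)) (fun _ _ => hq _) (mem_univ u)
    have hMu_le_M : Mu u w ≤ M w :=
      single_le_sum (f := fun u => Mu u w) (fun u' _ => hMu_nonneg u') (mem_univ u)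
    have hMu_pos := h.trans_le hq_le_Mu
    exact div_pos (mul_pos hMu_pos (h.trans_le hq_le_N)) (hMu_pos.trans_le hMu_le_M)
  have key := sum_mul_log_sum_div_le {v | f v = v'} (fun v _ => hq (u, v, w))
    (fun v _ => div_nonneg (mul_nonneg (hMu_nonneg u) (hN_nonneg v)) hM_nonneg)
    (fun v _ => hc_pos v)
  rw [← sum_div, ← mul_sum] at key
  simp only [div_div_eq_mul_div] at key
  exact key

end

theorem marginal_target_payment_strictly_positive_general
    (B A R Pt W : Type)
    [Fintype B] [Fintype A] [Fintype R] [Fintype Pt] [Fintype W] [DecidableEq Pt]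
    (p : B × A × R × W → ℝ) (hpos : ∀ t, 0 < p t)
    (φ : A × R → Pt) (g : Pt → Pt)
    (hCI : cmi (fun t : B × R × (A × W) => p (t.1, t.2.2.1, t.2.1, t.2.2.2)) = 0)
    (hpos' : 0 < cmi (fun t : B × R × (Pt × W) =>
        ∑ a, if φ (a, t.2.1) = t.2.2.1 then p (t.1, a, t.2.1, t.2.2.2) else 0)) :
    cmi (fun t : B × Pt × W =>
        ∑ a, ∑ r, if g (φ (a, r)) = t.2.1 then p (t.1, a, r, t.2.2) else 0) <
      cmi (fun t : B × A × W => ∑ r, p (t.1, t.2.1, r, t.2.2)) := by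
  classical
  set q : B × (A × R) × W → ℝ := fun t => p (t.1, t.2.1.1, t.2.1.2, t.2.2)
  have hq : ∀ t, 0 ≤ q t := fun t => (hpos _).le
  set q' := mapMid (fun x : A × R => (φ x, x.2)) q
  have hAR := cmi_prod_eq_add hq
  have hPtR := cmi_prod_eq_add (mapMid_nonneg _ hq : ∀ t, 0 ≤ q' t)
  have hmarg : (fun t : B × Pt × W => ∑ r, q' (t.1, (t.2.1, r), t.2.2)) = mapMid φ q :=
    funext fun t => sum_mapMid_prod _ q _ _ _
  have hcond : (fun t : B × R × (Pt × W) => q' (t.1, (t.2.2.1, t.2.1), t.2.2.2)) =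
      fun t => ∑ a, if φ (a, t.2.1) = t.2.2.1 then p (t.1, a, t.2.1, t.2.2.2) else 0 :=
    funext fun t => (mapMid_mk_snd_apply _ q _ _ _ _).trans (sum_filter _ _)
  have hlhs : (fun t : B × Pt × W =>
      ∑ a, ∑ r, if g (φ (a, r)) = t.2.1 then p (t.1, a, r, t.2.2) else 0) =
      mapMid g (mapMid φ q) := by
    rw [mapMid_mapMid]
    funext t
    rw [mapMid, sum_filter, Fintype.sum_prod_type]
    rfl
  rw [hmarg, hcond] at hPtR
  have hq'_le : cmi q' ≤ cmi q := cmi_mapMid_le _ hq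
  have hg_le : cmi (mapMid g (mapMid φ q)) ≤ cmi (mapMid φ q) :=
    cmi_mapMid_le g (mapMid_nonneg φ hq)
  rw [hlhs]
  linarith

/-- **Strict positivity of the marginal target payment.**
Let `X_B` (target's signal), `X_A` (reviewer A's effort-informed signal on the top
criterion), `X_R = X_A^{rest}` (A's other signals) and `W` (conditioning information)
be discrete random variables with full-support joint distribution `p`, and let
`X_A^{part} = φ(X_A, X_A^{rest})` be a deterministic function of `(X_A, X_A^{rest})`
(A's signals on lower criteria).  If
`I(X_B; X_A^{rest} | X_A, W) = 0` (conditional independence of the remaining signals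
given `X_A` and `W`) and `I(X_B; X_A^{rest} | X_A^{part}, W) > 0`, then
`I(X_B; g(X_A^{part}) | W) < I(X_B; X_A | W)` for any deterministic best-guess
function `g` of the partial signals. -/
theorem marginal_target_payment_strictly_positive
    (B A R Pt W : Type)
    [Fintype B] [Fintype A] [Fintype R] [Fintype Pt] [Fintype W] [DecidableEq Pt]
    (p : B × A × R × W → ℝ) (hpos : ∀ t, 0 < p t) (hsum : ∑ t, p t = 1)
    (φ : A × R → Pt) (g : Pt → Pt)
    (hCI : cmi (fun t : B × R × (A × W) => p (t.1, t.2.2.1, t.2.1, t.2.2.2)) = 0)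
    (hpos' : 0 < cmi (fun t : B × R × (Pt × W) =>
        ∑ a, if φ (a, t.2.1) = t.2.2.1 then p (t.1, a, t.2.1, t.2.2.2) else 0)) :
    cmi (fun t : B × Pt × W =>
        ∑ a, ∑ r, if g (φ (a, r)) = t.2.1 then p (t.1, a, r, t.2.2) else 0) <
      cmi (fun t : B × A × W => ∑ r, p (t.1, t.2.1, r, t.2.2)) :=
  marginal_target_payment_strictly_positive_general B A R Pt W p hpos φ g hCI hpos'
end
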